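/- Let i ∈ Z_{2^ℓ}^m with deg(i) ≥ j·2^ℓ and let 0 ≤ l ≤ j. Then there exists a ∈ Z_{2^ℓ}^m with a ≤₂ i and deg(a) = deg(i) - (j - l)·2^ℓ. -/

import Mathlib

open Finset

def le2 (a b : ℕ) : Prop := ∀ t, a.testBit t = true → b.testBit t = true

lemma le2_refl (a : ℕ) : le2 a a := fun _ h => h

lemma le2_trans {a b c : ℕ} (h1 : le2 a b) (h2 : le2 b c) : le2 a c :=
  fun t ht => h2 t (h1 t ht)

lemma le2_le {a b : ℕ} (h : le2 a b) : a ≤ b := by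
  have hab : a &&& b = a := by
    apply Nat.eq_of_testBit_eq
    intro t
    rw [Nat.testBit_and]
    cases ha : a.testBit t
    · simp
    · simp [h t ha]
  calc a = a &&& b := hab.symm
    _ ≤ b := Nat.and_le_right

lemma le2_mod (b n : ℕ) : le2 (b % 2 ^ n) b := by
  intro t ht
  rw [Nat.testBit_mod_two_pow] at ht
  exact (Bool.and_eq_true _ _ |>.mp ht).2

lemma core (ℓ : ℕ) : ∀ {m : ℕ} (i : Fin m → ℕ), (∀ k, i k < 2 ^ ℓ) → 2 ^ ℓ ≤ ∑ k, i k →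
    ∃ a : Fin m → ℕ, (∀ k, le2 (a k) (i k)) ∧ ∑ k, a k = (∑ k, i k) - 2 ^ ℓ := by
  induction ℓ with
  | zero =>
    intro m i hi hs
    have : ∑ k, i k = 0 := Finset.sum_eq_zero fun k _ => by have := hi k; omega
    omega
  | succ ℓ ih =>
    intro m i hi hs
    have hp : (2:ℕ) ^ (ℓ + 1) = 2 ^ ℓ * 2 := pow_succ 2 ℓ
    have hmod : ∀ k, 2 ^ ℓ ≤ i k → i k % 2 ^ ℓ = i k - 2 ^ ℓ := by
      intro k hk
      have h2 := hi k
      rw [Nat.mod_eq_sub_mod hk, Nat.mod_eq_of_lt]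
      omega
    set H := Finset.univ.filter (fun k => 2 ^ ℓ ≤ i k) with hH
    by_cases hc2 : 2 ≤ H.card
    · -- at least two components with high bit set
      obtain ⟨k1, hk1, k2, hk2, hne⟩ := Finset.one_lt_card.mp hc2
      have hk1' : 2 ^ ℓ ≤ i k1 := (Finset.mem_filter.mp hk1).2
      have hk2' : 2 ^ ℓ ≤ i k2 := (Finset.mem_filter.mp hk2).2
      refine ⟨fun k => if k = k1 ∨ k = k2 then i k % 2 ^ ℓ else i k, ?_, ?_⟩
      · intro k
        by_cases hk : k = k1 ∨ k = k2
        · simp only [hk, if_pos]; exact le2_mod _ _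
        · simp only [hk, if_neg, not_false_iff]; exact le2_refl _
      · have key : ∑ k, i k =
            (∑ k, if k = k1 ∨ k = k2 then i k % 2 ^ ℓ else i k) +
            ∑ k, (if k = k1 ∨ k = k2 then 2 ^ ℓ else (0:ℕ)) := by
          rw [← Finset.sum_add_distrib]
          apply Finset.sum_congr rfl
          intro k _
          by_cases hk : k = k1 ∨ k = k2
          · simp only [hk, if_pos]
            have hle : 2 ^ ℓ ≤ i k := by rcases hk with h | h <;> subst h <;> assumption
            rw [hmod k hle]; omega
          · simp [hk]
        have hfil : Finset.univ.filter (fun k => k = k1 ∨ k = k2) = {k1, k2} := by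
          ext x; simp [Finset.mem_insert]
        have hsum2 : ∑ k, (if k = k1 ∨ k = k2 then 2 ^ ℓ else (0:ℕ)) = 2 ^ ℓ + 2 ^ ℓ := by
          rw [← Finset.sum_filter, hfil, Finset.sum_pair hne]
        rw [hsum2] at key
        beta_reduce
        omega
    · -- at most one component with high bit set
      have hlowlt : ∀ k, i k % 2 ^ ℓ < 2 ^ ℓ := fun k => Nat.mod_lt _ (pow_pos (by norm_num) ℓ)
      have hsum : ∑ k, i k = (∑ k, i k % 2 ^ ℓ) + H.card * 2 ^ ℓ := by
        have key : ∑ k, i k = (∑ k, i k % 2 ^ ℓ) + ∑ k, (if 2 ^ ℓ ≤ i k then 2 ^ ℓ else (0:ℕ)) := by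
          rw [← Finset.sum_add_distrib]
          apply Finset.sum_congr rfl
          intro k _
          by_cases hk : 2 ^ ℓ ≤ i k
          · rw [if_pos hk, hmod k hk]; omega
          · rw [if_neg hk, Nat.mod_eq_of_lt (by omega)]
            omega
        rw [key, ← Finset.sum_filter, ← hH, Finset.sum_const, smul_eq_mul]
      interval_cases hcard : H.card
      · -- no high bits: all small, apply ih twice
        have hsmall : ∀ k, i k < 2 ^ ℓ := by
          intro k
          have : k ∉ H := by rw [Finset.card_eq_zero.mp hcard]; exact Finset.notMem_empty k
          rw [hH, Finset.mem_filter] at this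
          push_neg at this
          exact this (Finset.mem_univ k)
        have h1 : 2 ^ ℓ ≤ ∑ k, i k := by omega
        obtain ⟨a1, ha1le, ha1sum⟩ := ih i hsmall h1
        have hb : ∀ k, a1 k < 2 ^ ℓ := fun k => lt_of_le_of_lt (le2_le (ha1le k)) (hsmall k)
        have h2 : 2 ^ ℓ ≤ ∑ k, a1 k := by omega
        obtain ⟨a2, ha2le, ha2sum⟩ := ih a1 hb h2
        exact ⟨a2, fun k => le2_trans (ha2le k) (ha1le k), by omega⟩
      · -- exactly one high bit: drop it and apply ih to the low parts
        have h1 : 2 ^ ℓ ≤ ∑ k, i k % 2 ^ ℓ := by omega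
        obtain ⟨a, hale, hasum⟩ := ih (fun k => i k % 2 ^ ℓ) hlowlt h1
        exact ⟨a, fun k => le2_trans (hale k) (le2_mod _ _), by omega⟩

lemma iter (ℓ : ℕ) (t : ℕ) : ∀ {m : ℕ} (i : Fin m → ℕ), (∀ k, i k < 2 ^ ℓ) →
    t * 2 ^ ℓ ≤ ∑ k, i k →
    ∃ a : Fin m → ℕ, (∀ k, le2 (a k) (i k)) ∧ ∑ k, a k = (∑ k, i k) - t * 2 ^ ℓ := by
  induction t with
  | zero => intro m i _ _; exact ⟨i, fun k => le2_refl _, by simp⟩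
  | succ t ih =>
    intro m i hi h
    have e : (t + 1) * 2 ^ ℓ = t * 2 ^ ℓ + 2 ^ ℓ := by ring
    have h1 : 2 ^ ℓ ≤ ∑ k, i k := by omega
    obtain ⟨a1, ha1le, ha1sum⟩ := core ℓ i hi h1
    have hb : ∀ k, a1 k < 2 ^ ℓ := fun k => lt_of_le_of_lt (le2_le (ha1le k)) (hi k)
    have h2 : t * 2 ^ ℓ ≤ ∑ k, a1 k := by omega
    obtain ⟨a, hale, hasum⟩ := ih a1 hb h2
    exact ⟨a, fun k => le2_trans (hale k) (ha1le k), by omega⟩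

theorem stmt8 (ℓ m j l : ℕ) (hl : l ≤ j) (i : Fin m → ℕ) (hi : ∀ k, i k < 2 ^ ℓ)
    (hdeg : j * 2 ^ ℓ ≤ ∑ k, i k) :
    ∃ a : Fin m → ℕ, (∀ k, a k < 2 ^ ℓ) ∧ (∀ k, le2 (a k) (i k)) ∧
      (∑ k, a k) = (∑ k, i k) - (j - l) * 2 ^ ℓ := by
  have ht : (j - l) * 2 ^ ℓ ≤ ∑ k, i k :=
    le_trans (Nat.mul_le_mul_right _ (Nat.sub_le j l)) hdeg
  obtain ⟨a, hale, hasum⟩ := iter ℓ (j - l) i hi ht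
  exact ⟨a, fun k => lt_of_le_of_lt (le2_le (hale k)) (hi k), hale, hasum⟩
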